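/- Fix ξ ∈ (−1,1). There exist constants C > 0, c > 0 and ε₀ > 0 such that for every ε ∈ (0, ε₀] and every continuous function ψ : [−1,1] → ℝ, the weak residual of the glued profile satisfies | ε²·(∂ₓU^ε(ξ⁺;ξ) − ∂ₓU^ε(ξ⁻;ξ))·ψ(ξ) + ∫_{−1}^{1} ( ε² ∂ₓ²U^ε(x;ξ) + U^ε(x;ξ) − U^ε(x;ξ)³ )·ψ(x) dx | ≤ C·e^{−c/ε}·sup_{x∈[−1,1]} |ψ(x)|, where ∂ₓ²U^ε denotes the classical second derivative on each of the two smooth pieces [−1,ξ) and (ξ,1]. In other words, hypothesis H1 of the paper, |⟨ψ, F^ε[U^ε(·;ξ)]⟩| ≤ Ω^ε(ξ)·‖ψ‖_∞ for all continuous ψ, holds for this family with Ω^ε(ξ) = C·e^{−c/ε}, which converges to zero as ε → 0. -/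

import Mathlib

noncomputable def coth (x : ℝ) : ℝ := Real.cosh x / Real.sinh x

/-!
On each side of `ξ` the glued profile is `k * tanh ((ξ - x) / (√2 ε))`, and `tanh ((ξ - x) / (√2 ε))`
solves `ε² u'' = u³ - u` exactly. Scaling it by `k` therefore leaves the pointwise residual
`k (1 - k²) tanh³`, and the derivative jump at `ξ` is `ε (k₁ - k₂) / √2`. Both are controlled by
`coth y - 1`, which is of order `e^{-2y}`; with `y = (1 ± ξ) / (√2 ε)` this is `O(e^{-c/ε})`.
-/

open Real Set

noncomputable def kink (k s ξ x : ℝ) : ℝ := k * tanh ((ξ - x) / s)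

theorem Real.hasDerivAt_tanh (x : ℝ) : HasDerivAt tanh (1 - tanh x ^ 2) x := by
  rw [show tanh = fun y => sinh y / cosh y from funext tanh_eq_sinh_div_cosh]
  refine ((hasDerivAt_sinh x).div (hasDerivAt_cosh x) (cosh_pos x).ne').congr_deriv ?_
  beta_reduce
  field_simp

section Kink

variable (k s ξ : ℝ)

theorem hasDerivAt_kink (x : ℝ) :
    HasDerivAt (kink k s ξ) (-(k / s) * (1 - tanh ((ξ - x) / s) ^ 2)) x := by
  have hinner : HasDerivAt (fun x => (ξ - x) / s) (-1 / s) x := by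
    simpa using ((hasDerivAt_id x).const_sub ξ).div_const s
  exact (((hasDerivAt_tanh _).comp x hinner).const_mul k).congr_deriv (by ring)

theorem deriv_kink : deriv (kink k s ξ) = fun x => -(k / s) * (1 - kink 1 s ξ x ^ 2) := by
  funext x
  simpa [kink] using (hasDerivAt_kink k s ξ x).deriv

theorem deriv_deriv_kink (x : ℝ) :
    deriv (deriv (kink k s ξ)) x =
      -(2 * k / s ^ 2) * tanh ((ξ - x) / s) * (1 - tanh ((ξ - x) / s) ^ 2) := by
  rw [deriv_kink]
  refine ((((hasDerivAt_kink 1 s ξ x).pow 2).const_sub 1).const_mul _).deriv.trans ?_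
  simp only [kink]
  ring

theorem kink_residual {ε : ℝ} (hε : ε ≠ 0) (x : ℝ) :
    ε ^ 2 * deriv (deriv (kink k (√2 * ε) ξ)) x + kink k (√2 * ε) ξ x - kink k (√2 * ε) ξ x ^ 3 =
      k * (1 - k ^ 2) * tanh ((ξ - x) / (√2 * ε)) ^ 3 := by
  have hs : (√2 * ε) ^ 2 = 2 * ε ^ 2 := by rw [mul_pow, sq_sqrt zero_le_two]
  rw [deriv_deriv_kink, hs, kink]
  field_simp
  ring

end Kink

theorem exp_div_four_le_sinh {y : ℝ} (hy : 1 ≤ y) : exp y / 4 ≤ sinh y := by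
  have hinv : exp (-y) * exp y = 1 := by rw [← exp_add, neg_add_cancel, exp_zero]
  have htwo : 2 ≤ exp y := by linarith [add_one_le_exp y]
  rw [sinh_eq]
  nlinarith [exp_pos (-y)]

theorem one_lt_coth {y : ℝ} (hy : 0 < y) : 1 < coth y := by
  rw [coth, one_lt_div (sinh_pos_iff.2 hy)]
  exact sinh_lt_cosh y

theorem coth_sub_one_le {y : ℝ} (hy : 1 ≤ y) : coth y - 1 ≤ 4 * exp (-(2 * y)) := by
  have hsinh : 0 < sinh y := sinh_pos_iff.2 (by linarith)
  calc coth y - 1 = exp (-y) / sinh y := by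
        rw [coth, ← cosh_sub_sinh]
        field_simp
    _ ≤ exp (-y) / (exp y / 4) := by
        gcongr
        exact exp_div_four_le_sinh hy
    _ = 4 * exp (-(2 * y)) := by
        rw [show -(2 * y) = -y + -y by ring, exp_add, exp_neg y]
        field_simp

theorem coth_mul_coth_sq_sub_one_le {y : ℝ} (hy : 1 ≤ y) :
    coth y * (coth y ^ 2 - 1) ≤ 64 * exp (-(2 * y)) := by
  have hsinh : 0 < sinh y := sinh_pos_iff.2 (by linarith)
  have hcosh : cosh y ≤ exp y := by
    rw [cosh_eq]
    linarith [exp_le_exp.2 (show -y ≤ y by linarith)]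
  calc coth y * (coth y ^ 2 - 1) = cosh y / sinh y ^ 3 := by
        rw [coth]
        field_simp
        linarith [cosh_sq_sub_sinh_sq y]
    _ ≤ exp y / (exp y / 4) ^ 3 := by
        gcongr
        exact exp_div_four_le_sinh hy
    _ = 64 * exp (-(2 * y)) := by
        rw [show -(2 * y) = -y + -y by ring, exp_add, exp_neg y]
        field_simp
        ring

theorem one_le_div_sqrt_two_mul {d ε : ℝ} (hε : 0 < ε) (h : 2 * ε ≤ d) : 1 ≤ d / (√2 * ε) := by
  rw [one_le_div (by positivity)]
  nlinarith [sqrt_le_sqrt (show (2 : ℝ) ≤ 4 by norm_num),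
    show √4 = 2 by rw [show (4 : ℝ) = 2 ^ 2 by norm_num, sqrt_sq zero_le_two]]

theorem exp_neg_two_mul_div_sqrt_two_mul_le {m d ε : ℝ} (hε : 0 < ε) (hm : 0 ≤ m)
    (hmd : m ≤ d) : exp (-(2 * (d / (√2 * ε)))) ≤ exp (-m / ε) := by
  have hd : 2 * (d / (√2 * ε)) = √2 * (d / ε) := by
    field_simp
    rw [sq_sqrt zero_le_two]
    ring
  rw [exp_le_exp, hd, neg_div, neg_le_neg_iff]
  have hd' : m / ε ≤ d / ε := by gcongr
  nlinarith [one_le_sqrt.2 one_le_two, div_nonneg (hm.trans hmd) hε.le]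

theorem coth_mem_Icc {m d ε : ℝ} (hε : 0 < ε) (h2ε : 2 * ε ≤ m) (hmd : m ≤ d) :
    coth (d / (√2 * ε)) ∈ Icc 1 (1 + 4 * exp (-m / ε)) := by
  have hy : 1 ≤ d / (√2 * ε) := one_le_div_sqrt_two_mul hε (h2ε.trans hmd)
  refine ⟨(one_lt_coth (by linarith)).le, ?_⟩
  linarith [coth_sub_one_le hy, exp_neg_two_mul_div_sqrt_two_mul_le hε (by linarith) hmd]

theorem abs_kink_residual_le {m d ε ξ : ℝ} (hε : 0 < ε) (h2ε : 2 * ε ≤ m) (hmd : m ≤ d)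
    (x : ℝ) :
    |ε ^ 2 * deriv (deriv (kink (coth (d / (√2 * ε))) (√2 * ε) ξ)) x
        + kink (coth (d / (√2 * ε))) (√2 * ε) ξ x - kink (coth (d / (√2 * ε))) (√2 * ε) ξ x ^ 3|
      ≤ 64 * exp (-m / ε) := by
  set y := d / (√2 * ε)
  have hy : 1 ≤ y := one_le_div_sqrt_two_mul hε (h2ε.trans hmd)
  have hk : 1 < coth y := one_lt_coth (by linarith)
  have htanh : |tanh ((ξ - x) / (√2 * ε))| ^ 3 ≤ 1 :=
    pow_le_one₀ (abs_nonneg _) (abs_tanh_lt_one _).le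
  rw [kink_residual _ _ hε.ne', abs_mul, abs_pow, abs_mul, abs_of_pos (by linarith),
    abs_of_nonpos (by nlinarith), neg_sub]
  calc coth y * (coth y ^ 2 - 1) * |tanh ((ξ - x) / (√2 * ε))| ^ 3
      ≤ coth y * (coth y ^ 2 - 1) := mul_le_of_le_one_right (by nlinarith) htanh
    _ ≤ 64 * exp (-(2 * y)) := coth_mul_coth_sq_sub_one_le hy
    _ ≤ 64 * exp (-m / ε) :=
        mul_le_mul_of_nonneg_left (exp_neg_two_mul_div_sqrt_two_mul_le hε (by linarith) hmd)
          (by norm_num)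

theorem abs_jump_deriv_kink_le {ε k₁ k₂ a ξ : ℝ} (hε : 0 < ε) (hε1 : ε ≤ 1)
    (hk₁ : k₁ ∈ Icc 1 (1 + a)) (hk₂ : k₂ ∈ Icc 1 (1 + a)) :
    |ε ^ 2 * (deriv (kink k₂ (√2 * ε) ξ) ξ - deriv (kink k₁ (√2 * ε) ξ) ξ)| ≤ a := by
  have hjump : ε ^ 2 * (deriv (kink k₂ (√2 * ε) ξ) ξ - deriv (kink k₁ (√2 * ε) ξ) ξ) =
      ε / √2 * (k₁ - k₂) := by
    simp only [deriv_kink, kink, sub_self, zero_div, tanh_zero]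
    field_simp
    ring
  have hfactor : ε / √2 ≤ 1 := by
    rw [div_le_one (by positivity)]
    linarith [one_le_sqrt.2 one_le_two]
  have hk : |k₁ - k₂| ≤ a := by simpa using abs_sub_le_of_le_of_le hk₁.1 hk₁.2 hk₂.1 hk₂.2
  rw [hjump, abs_mul, abs_of_pos (by positivity)]
  nlinarith [abs_nonneg (k₁ - k₂)]

theorem abs_mul_add_integral_mul_le {a b ξ J A B M : ℝ} {r ψ : ℝ → ℝ} (hξ : ξ ∈ Icc a b)
    (hJ : |J| ≤ A) (hr : ∀ x ∈ Icc a b, |r x| ≤ B) (hψ : ∀ x ∈ Icc a b, |ψ x| ≤ M) :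
    |J * ψ ξ + ∫ x in a..b, r x * ψ x| ≤ (A + (b - a) * B) * M := by
  have hab : a ≤ b := hξ.1.trans hξ.2
  have hB : 0 ≤ B := (abs_nonneg _).trans (hr ξ hξ)
  have hM : 0 ≤ M := (abs_nonneg _).trans (hψ ξ hξ)
  have hint : ‖∫ x in a..b, r x * ψ x‖ ≤ B * M * |b - a| := by
    refine intervalIntegral.norm_integral_le_of_norm_le_const fun x hx => ?_
    rw [uIoc_of_le hab] at hx
    rw [norm_mul, Real.norm_eq_abs, Real.norm_eq_abs]
    exact mul_le_mul (hr x (Ioc_subset_Icc_self hx)) (hψ x (Ioc_subset_Icc_self hx))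
      (abs_nonneg _) hB
  rw [Real.norm_eq_abs, abs_of_nonneg (sub_nonneg.2 hab)] at hint
  calc |J * ψ ξ + ∫ x in a..b, r x * ψ x|
      ≤ |J| * |ψ ξ| + |∫ x in a..b, r x * ψ x| := (abs_add_le _ _).trans_eq (by rw [abs_mul])
    _ ≤ A * M + B * M * (b - a) :=
        add_le_add (mul_le_mul hJ (hψ ξ hξ) (abs_nonneg _) ((abs_nonneg _).trans hJ)) hint
    _ = (A + (b - a) * B) * M := by ring

/-- Hypothesis H1 for the glued Allen–Cahn profile: fix `ξ ∈ (-1,1)`. There exist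
`C, c, ε₀ > 0` such that for every `ε ∈ (0, ε₀]` and every continuous `ψ : [-1,1] → ℝ`
bounded by `M` on `[-1,1]`, the weak residual of the glued profile (derivative-jump
Dirac term plus pointwise residual on the two smooth pieces, represented by the global
smooth functions `U₁, U₂`) satisfies
`|ε² (∂ₓU^ε(ξ⁺) - ∂ₓU^ε(ξ⁻)) ψ(ξ) + ∫_{-1}^{1} (ε² ∂ₓ²U^ε + U^ε - (U^ε)³) ψ|
  ≤ C e^{-c/ε} M`, i.e. `Ω^ε(ξ)` may be taken of order `e^{-c/ε}`, vanishing as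
`ε → 0`. -/
theorem stmt_17 (ξ : ℝ) (hξ : ξ ∈ Set.Ioo (-1 : ℝ) 1)
    (k₁ k₂ : ℝ → ℝ)
    (hk₁ : ∀ ε : ℝ, k₁ ε = coth ((1 + ξ) / (Real.sqrt 2 * ε)))
    (hk₂ : ∀ ε : ℝ, k₂ ε = coth ((1 - ξ) / (Real.sqrt 2 * ε)))
    (U U₁ U₂ : ℝ → ℝ → ℝ)
    (hU₁ : ∀ ε x, U₁ ε x = k₁ ε * Real.tanh ((ξ - x) / (Real.sqrt 2 * ε)))
    (hU₂ : ∀ ε x, U₂ ε x = k₂ ε * Real.tanh ((ξ - x) / (Real.sqrt 2 * ε)))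
    (hU : ∀ ε x, U ε x = if x ≤ ξ then U₁ ε x else U₂ ε x) :
    ∃ C > (0 : ℝ), ∃ c > (0 : ℝ), ∃ ε₀ > (0 : ℝ), ∀ ε ∈ Set.Ioc (0 : ℝ) ε₀,
      ∀ ψ : ℝ → ℝ, ContinuousOn ψ (Set.Icc (-1) 1) →
      ∀ M : ℝ, (∀ x ∈ Set.Icc (-1 : ℝ) 1, |ψ x| ≤ M) →
      |ε ^ 2 * (deriv (U₂ ε) ξ - deriv (U₁ ε) ξ) * ψ ξ
        + ∫ x in (-1 : ℝ)..1,
            (ε ^ 2 * (if x ≤ ξ then deriv (deriv (U₁ ε)) x else deriv (deriv (U₂ ε)) x)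
              + U ε x - (U ε x) ^ 3) * ψ x|
        ≤ C * Real.exp (-c / ε) * M := by
  obtain ⟨hξ₁, hξ₂⟩ := hξ
  set m := min (1 + ξ) (1 - ξ)
  have hm : 0 < m := lt_min (by linarith) (by linarith)
  refine ⟨132, by norm_num, m, hm, m / 2, by positivity, ?_⟩
  rintro ε ⟨hε, hεm⟩ ψ - M hψ
  have h2ε : 2 * ε ≤ m := by linarith
  have hU₁ε : U₁ ε = kink (coth ((1 + ξ) / (√2 * ε))) (√2 * ε) ξ := by
    funext x; rw [hU₁, hk₁, kink]
  have hU₂ε : U₂ ε = kink (coth ((1 - ξ) / (√2 * ε))) (√2 * ε) ξ := by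
    funext x; rw [hU₂, hk₂, kink]
  have hJ : |ε ^ 2 * (deriv (U₂ ε) ξ - deriv (U₁ ε) ξ)| ≤ 4 * exp (-m / ε) := by
    rw [hU₁ε, hU₂ε]
    exact abs_jump_deriv_kink_le hε (by linarith [min_le_left (1 + ξ) (1 - ξ)])
      (coth_mem_Icc hε h2ε (min_le_left _ _)) (coth_mem_Icc hε h2ε (min_le_right _ _))
  have hr : ∀ x ∈ Icc (-1 : ℝ) 1, |ε ^ 2 * (if x ≤ ξ then deriv (deriv (U₁ ε)) x
      else deriv (deriv (U₂ ε)) x) + U ε x - U ε x ^ 3| ≤ 64 * exp (-m / ε) := by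
    intro x _
    rw [hU, hU₁ε, hU₂ε]
    split_ifs
    · exact abs_kink_residual_le hε h2ε (min_le_left _ _) x
    · exact abs_kink_residual_le hε h2ε (min_le_right _ _) x
  calc _ ≤ (4 * exp (-m / ε) + (1 - -1) * (64 * exp (-m / ε))) * M :=
        abs_mul_add_integral_mul_le ⟨hξ₁.le, hξ₂.le⟩ hJ hr hψ
    _ = 132 * exp (-m / ε) * M := by ring
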